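/- Let U ⊆ ℝⁿ be bounded open and let ε > 0. There exists k > 0, depending only on H, the diameter of U, and ε, such that whenever u, v ∈ Lip_loc(U) ∩ C(Ū) satisfy u = v on ∂U and sup_{x ∈ U} (S⁺u(x) + S⁺v(x)) ≤ k, then max_{Ū} |u − v| ≤ ε. -/

import Mathlib

open Set Metric MeasureTheory Filter Bornology
open scoped RealInnerProductSpace

noncomputable section

abbrev Euc (n : ℕ) := EuclideanSpace ℝ (Fin n)

variable {n : ℕ}

/-- The Lagrangian of `H`, an extended real number. -/
def Lag (H : Euc n → ℝ) (q : Euc n) : EReal :=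
  ⨆ p : Euc n, ((⟪p, q⟫ - H p : ℝ) : EReal)

/-- `T^t u (x)`, with supremum taken over `y ∈ S`. Points `y` where the Lagrangian term
is `+∞` contribute nothing, since no real number equals `-∞`. -/
def TupOn (H : Euc n → ℝ) (S : Set (Euc n)) (u : Euc n → ℝ) (t : ℝ) (x : Euc n) : ℝ :=
  if t = 0 then u x
  else sSup {r : ℝ | ∃ y ∈ S, (r : EReal) = (u y : EReal) - (t : EReal) * Lag H (t⁻¹ • (y - x))}

/-- `T_t u (x)`, with infimum taken over `y ∈ S`. -/
def TdnOn (H : Euc n → ℝ) (S : Set (Euc n)) (u : Euc n → ℝ) (t : ℝ) (x : Euc n) : ℝ :=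
  if t = 0 then u x
  else sInf {r : ℝ | ∃ y ∈ S, (r : EReal) = (u y : EReal) + (t : EReal) * Lag H (t⁻¹ • (x - y))}

/-- `S⁺ u (x) = limsup_{t ↓ 0} (T^t u(x) - u(x))/t`. -/
def Splus (H : Euc n → ℝ) (U : Set (Euc n)) (u : Euc n → ℝ) (x : Euc n) : ℝ :=
  limsup (fun t => (TupOn H U u t x - u x) / t) (nhdsWithin 0 (Ioi 0))

/-- The oscillation `osc_U u = sup_U u - inf_U u`. -/
def oscOn (u : Euc n → ℝ) (U : Set (Euc n)) : ℝ := sSup (u '' U) - sInf (u '' U)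

/-- `U_r = {x ∈ U : dist(x, ∂U) > r}`. -/
def inUr (U : Set (Euc n)) (r : ℝ) : Set (Euc n) := {x ∈ U | r < infDist x (frontier U)}

/-- The cone function `C_k(x) = max {p·x : H(p) = k}`. -/
def coneFn (H : Euc n → ℝ) (k : ℝ) (x : Euc n) : ℝ :=
  sSup {r : ℝ | ∃ p, H p = k ∧ r = ⟪p, x⟫}

/-- The subdifferential of `H` at `p`. -/
def subdiff (H : Euc n → ℝ) (p : Euc n) : Set (Euc n) :=
  {q | ∀ p', H p + ⟪q, p' - p⟫ ≤ H p'}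

/-- `Γ_k`: subgradients of `H` at points of the level set `H⁻¹(k)`. -/
def GammaSet (H : Euc n → ℝ) (k : ℝ) : Set (Euc n) :=
  {q | ∃ p, H p = k ∧ q ∈ subdiff H p}

/-- `W_k`: subgradients of `H` at points of the sublevel set `H⁻¹([0,k])`. -/
def WSet (H : Euc n → ℝ) (k : ℝ) : Set (Euc n) :=
  {q | ∃ p, 0 ≤ H p ∧ H p ≤ k ∧ q ∈ subdiff H p}

/-- `u ∈ Lip_loc(U)`: `u` is locally Lipschitz on `U`. -/
def LocLipOn (u : Euc n → ℝ) (U : Set (Euc n)) : Prop :=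
  ∀ x ∈ U, ∃ K : NNReal, ∃ s ∈ nhdsWithin x U, LipschitzOnWith K u s

/-- `ess sup_V H(Dv)`, defined to be `+∞` if `v` is not locally Lipschitz in `V`.
Here `Dv` is the a.e.-defined gradient (Rademacher). -/
def essSupH (H : Euc n → ℝ) (V : Set (Euc n)) (v : Euc n → ℝ) : EReal :=
  haveI := Classical.propDecidable (LocLipOn v V)
  if LocLipOn v V then
    essSup (fun x => ((H (gradient v x) : ℝ) : EReal)) (volume.restrict V)
  else ⊤

/-- `u` is absolutely subminimizing for `H` in `U`. -/
def AbsSubmin (H : Euc n → ℝ) (U : Set (Euc n)) (u : Euc n → ℝ) : Prop :=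
  LocLipOn u U ∧
  ∀ V : Set (Euc n), IsOpen V → IsCompact (closure V) → closure V ⊆ U →
    ∀ v : Euc n → ℝ, LocLipOn v V → ContinuousOn v (closure V) →
      EqOn v u (frontier V) → (∀ x ∈ V, v x ≤ u x) →
        essSupH H V u ≤ essSupH H V v

/-- `u` is absolutely superminimizing for `H` in `U`. -/
def AbsSupermin (H : Euc n → ℝ) (U : Set (Euc n)) (u : Euc n → ℝ) : Prop :=
  LocLipOn u U ∧
  ∀ V : Set (Euc n), IsOpen V → IsCompact (closure V) → closure V ⊆ U →
    ∀ v : Euc n → ℝ, LocLipOn v V → ContinuousOn v (closure V) →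
      EqOn v u (frontier V) → (∀ x ∈ V, u x ≤ v x) →
        essSupH H V u ≤ essSupH H V v

/-- `u` satisfies comparisons with cones from above in `U`. -/
def CmpConesAbove (H : Euc n → ℝ) (U : Set (Euc n)) (u : Euc n → ℝ) : Prop :=
  ∀ k : ℝ, 0 ≤ k → ∀ V : Set (Euc n), IsOpen V → IsCompact (closure V) → closure V ⊆ U →
    ∀ x₀, x₀ ∉ V →
      sSup ((fun x => u x - coneFn H k (x - x₀)) '' closure V) =
      sSup ((fun x => u x - coneFn H k (x - x₀)) '' frontier V)

/-- `u` satisfies the convexity criterion in `U`. -/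
def ConvexityCriterion (H : Euc n → ℝ) (U : Set (Euc n)) (u : Euc n → ℝ) : Prop :=
  ∀ V : Set (Euc n), IsOpen V → IsCompact (closure V) → closure V ⊆ U →
    ∃ δ > (0:ℝ), ∀ x ∈ V, ConvexOn ℝ (Icc 0 δ) (fun t => TupOn H U u t x)

/-- `u` satisfies the pointwise convexity criterion in `U`. -/
def PtwiseCC (H : Euc n → ℝ) (U : Set (Euc n)) (u : Euc n → ℝ) : Prop :=
  UpperSemicontinuousOn (Splus H U u) U ∧
  ∀ x ∈ U, ∃ δ > (0:ℝ), ConvexOn ℝ (Icc 0 δ) (fun t => TupOn H U u t x)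

end

/-!
The zero set `Z = H⁻¹(0)` is convex with empty interior, hence lies in a hyperplane `e⊥`. As `H`
is convex, nonnegative and vanishes only on the bounded set `Z`, it is at least some `κ > 0` off
the slab `{|p·e| < δ}`, and then, by convexity along rays through `0`, at least `(κ/δ)|p·e|`
there; so `L(±q) ≤ ‖q‖δ` for `q = (κ/δ)e`.

Testing `T^h u(x)` with `y = x` shows `S⁺ ≥ 0`, so `S⁺u ≤ k` and `S⁺v ≤ k`. Testing it with
`y = x + hq` shows that `S⁺u ≤ k` bounds the right Dini derivative of `u` in direction `q` by
`L(q) + k`, so `u(x + Tq) - u(x) ≤ T (L(q) + k)` along segments in `U`, and likewise for `-q`.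
Follow the ray from `x ∈ U` in direction `q` to its first point `y ∈ ∂U`. Then `T‖q‖ ≤ diam U`,
so `|u(x) - u(y)|` and `|v(x) - v(y)|` are at most `T(‖q‖δ + k) ≤ ε/2`, while `u(y) = v(y)`.
-/

open Topology

lemma ConvexOn.map_smul_le_mul {E : Type*} [AddCommGroup E] [Module ℝ E] {H : E → ℝ}
    (hH : ConvexOn ℝ univ H) (hH0 : H 0 = 0) (p : E) {t : ℝ} (ht₀ : 0 ≤ t) (ht₁ : t ≤ 1) :
    H (t • p) ≤ t * H p := by
  simpa [hH0] using hH.2 (mem_univ p) (mem_univ 0) ht₀ (sub_nonneg.2 ht₁) (add_sub_cancel t 1)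

lemma ConvexOn.exists_pos_le_of_forall_ne_zero {E : Type*} [NormedAddCommGroup E]
    [NormedSpace ℝ E] [ProperSpace E] {H : E → ℝ} (hH : ConvexOn ℝ univ H) (hHc : Continuous H)
    (hH0 : H 0 = 0) (hHnn : ∀ p, 0 ≤ H p) (hZb : IsBounded {p | H p = 0}) {F : Set E}
    (hF : IsClosed F) (hFZ : ∀ p ∈ F, H p ≠ 0) : ∃ κ > 0, ∀ p ∈ F, κ ≤ H p := by
  obtain ⟨R, hR⟩ := hZb.subset_closedBall 0
  set r := |R| + 1
  have hr : 0 < r := by positivity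
  have hpos : ∀ p ∈ sphere (0 : E) r ∪ closedBall 0 r ∩ F, 0 < H p := by
    rintro p (hp | ⟨-, hp⟩)
    · refine (hHnn p).lt_of_ne' fun h => ?_
      have := hR h
      rw [mem_closedBall_zero_iff] at this
      rw [mem_sphere_zero_iff_norm] at hp
      linarith [le_abs_self R]
    · exact (hHnn p).lt_of_ne' (hFZ p hp)
  obtain ⟨κ, hκ, hκK⟩ := ((isCompact_sphere 0 r).union
    ((isCompact_closedBall 0 r).inter_right hF)).exists_forall_le' hHc.continuousOn hpos
  refine ⟨κ, hκ, fun p hp => ?_⟩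
  by_cases hpr : ‖p‖ ≤ r
  · exact hκK p (Or.inr ⟨mem_closedBall_zero_iff.2 hpr, hp⟩)
  have hp0 : 0 < ‖p‖ := hr.trans (not_le.1 hpr)
  have hsp : (r / ‖p‖) • p ∈ sphere (0 : E) r := by
    rw [mem_sphere_zero_iff_norm, norm_smul, Real.norm_eq_abs, abs_of_pos (by positivity),
      div_mul_cancel₀ _ hp0.ne']
  have hle : r / ‖p‖ ≤ 1 := div_le_one_of_le₀ (not_le.1 hpr).le hp0.le
  calc κ ≤ H ((r / ‖p‖) • p) := hκK _ (Or.inl hsp)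
    _ ≤ r / ‖p‖ * H p := hH.map_smul_le_mul hH0 p (by positivity) hle
    _ ≤ H p := mul_le_of_le_one_left (hHnn p) hle

section InnerProductSpace

variable {E : Type*} [NormedAddCommGroup E] [InnerProductSpace ℝ E]

lemma exists_norm_eq_one_forall_inner_eq_zero [FiniteDimensional ℝ E] {Z : Set E}
    (hZ : Convex ℝ Z) (h0 : (0 : E) ∈ Z) (hZi : interior Z = ∅) :
    ∃ e : E, ‖e‖ = 1 ∧ ∀ p ∈ Z, ⟪p, e⟫ = 0 := by
  have hspan : vectorSpan ℝ Z ≠ ⊤ := fun h => by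
    have := hZ.interior_nonempty_iff_affineSpan_eq_top.2
      ((AffineSubspace.affineSpan_eq_top_iff_vectorSpan_eq_top_of_nonempty ℝ E E ⟨0, h0⟩).2 h)
    simp [hZi] at this
  obtain ⟨e, he, he0⟩ := Submodule.exists_mem_ne_zero_of_ne_bot
    fun h => hspan (Submodule.orthogonal_eq_bot_iff.1 h)
  refine ⟨‖e‖⁻¹ • e, norm_smul_inv_norm he0, fun p hp => ?_⟩
  have hpV : p ∈ vectorSpan ℝ Z := by simpa using vsub_mem_vectorSpan ℝ hp h0
  rw [real_inner_smul_right, (Submodule.mem_orthogonal _ e).1 he p hpV, mul_zero]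

lemma ConvexOn.exists_mul_abs_inner_sub_le [ProperSpace E] {H : E → ℝ} (hH : ConvexOn ℝ univ H)
    (hHc : Continuous H) (hH0 : H 0 = 0) (hHnn : ∀ p, 0 ≤ H p) (hZb : IsBounded {p | H p = 0})
    {e : E} (he : ∀ p, H p = 0 → ⟪p, e⟫ = 0) {δ : ℝ} (hδ : 0 < δ) :
    ∃ ρ > 0, ∀ p, ρ * |⟪p, e⟫| - H p ≤ ρ * δ := by
  obtain ⟨κ, hκ, hκF⟩ := hH.exists_pos_le_of_forall_ne_zero hHc hH0 hHnn hZb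
    (F := {p | δ ≤ |⟪p, e⟫|}) (isClosed_le continuous_const (by fun_prop))
    fun p (hp : δ ≤ |⟪p, e⟫|) h0 => by rw [he p h0, abs_zero] at hp; linarith
  refine ⟨κ / δ, by positivity, fun p => ?_⟩
  rcases lt_or_ge |⟪p, e⟫| δ with hp | hp
  · nlinarith [hHnn p, div_pos hκ hδ]
  -- On `{δ ≤ |p·e|}`, convexity along the ray through `p` improves `κ ≤ H` to `κ |p·e| / δ ≤ H`.
  set s := |⟪p, e⟫|
  have hs : 0 < s := hδ.trans_le hp
  have hmem : δ ≤ |⟪(δ / s) • p, e⟫| := by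
    rw [real_inner_smul_left, abs_mul, abs_of_pos (by positivity), div_mul_cancel₀ _ hs.ne']
  have hκs : κ ≤ δ / s * H p :=
    (hκF _ hmem).trans (hH.map_smul_le_mul hH0 p (by positivity) (div_le_one_of_le₀ hp hs.le))
  have hρs : κ / δ * s ≤ H p := by
    rw [div_mul_eq_mul_div, div_le_iff₀ hδ]
    calc κ * s ≤ δ / s * H p * s := by gcongr
      _ = H p * δ := by field_simp
  have : 0 ≤ κ / δ * δ := by positivity
  linarith

end InnerProductSpace

lemma IsOpen.exists_mem_frontier_of_ray {E : Type*} [NormedAddCommGroup E] [NormedSpace ℝ E]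
    {U : Set E} (hU : IsOpen U) (hUb : IsBounded U) {x : E} (hx : x ∈ U) {q : E} (hq : q ≠ 0) :
    ∃ T > (0 : ℝ), (∀ τ ∈ Ico 0 T, x + τ • q ∈ U) ∧ x + T • q ∈ frontier U ∧
      T * ‖q‖ ≤ diam U := by
  set S := Ici 0 ∩ (fun τ : ℝ => x + τ • q) ⁻¹' Uᶜ
  have hpath : Continuous fun τ : ℝ => x + τ • q := by fun_prop
  obtain ⟨R, hR⟩ := hUb.subset_closedBall x
  have hSne : S.Nonempty := by
    refine ⟨(|R| + 1) / ‖q‖, mem_Ici.2 (by positivity), fun hmem => ?_⟩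
    have := hR hmem
    rw [mem_closedBall, dist_eq_norm, add_sub_cancel_left, norm_smul, Real.norm_eq_abs,
      abs_of_pos (by positivity), div_mul_cancel₀ _ (norm_ne_zero_iff.2 hq)] at this
    linarith [le_abs_self R]
  have hSbdd : BddBelow S := ⟨0, fun _ hτ => hτ.1⟩
  obtain ⟨hT0, hTU⟩ :=
    (isClosed_Ici.inter (hU.isClosed_compl.preimage hpath)).csInf_mem hSne hSbdd
  have hT : 0 < sInf S := hT0.lt_of_ne fun h => hTU (by rw [← h]; simpa using hx)
  have hseg : ∀ τ ∈ Ico 0 (sInf S), x + τ • q ∈ U := fun τ hτ =>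
    not_not.1 fun h => (notMem_of_lt_csInf hτ.2 hSbdd) ⟨hτ.1, h⟩
  have hcl : x + sInf S • q ∈ closure U := closure_mono (image_subset_iff.2 hseg)
    (image_closure_subset_closure_image hpath
      ⟨_, by rw [closure_Ico hT.ne]; exact right_mem_Icc.2 hT0, rfl⟩)
  refine ⟨sInf S, hT, hseg, hU.frontier_eq ▸ ⟨hcl, hTU⟩, ?_⟩
  have := dist_le_diam_of_mem hUb.closure hcl (subset_closure hx)
  rwa [diam_closure, dist_eq_norm, add_sub_cancel_left, norm_smul, Real.norm_of_nonneg hT0]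
    at this

section Lagrangian

variable {n : ℕ} {H : Euc n → ℝ}

lemma le_lag (p q : Euc n) : ((⟪p, q⟫ - H p : ℝ) : EReal) ≤ Lag H q :=
  le_iSup (fun p => ((⟪p, q⟫ - H p : ℝ) : EReal)) p

lemma lag_le {q : Euc n} {c : ℝ} (h : ∀ p, ⟪p, q⟫ - H p ≤ c) : Lag H q ≤ c :=
  iSup_le fun p => EReal.coe_le_coe_iff.2 (h p)

lemma lag_ne_bot (q : Euc n) : Lag H q ≠ ⊥ :=
  ne_bot_of_le_ne_bot (EReal.coe_ne_bot _) (le_lag 0 q)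

lemma lag_zero (hH0 : H 0 = 0) (hHnn : ∀ p, 0 ≤ H p) : Lag H 0 = 0 :=
  le_antisymm (lag_le fun p => by simp [hHnn p]) (by simpa [hH0] using le_lag (H := H) 0 0)

lemma exists_mul_norm_sub_le_lag (hHc : Continuous H) (β : ℝ) :
    ∃ C, ∀ q : Euc n, ((β * ‖q‖ - C : ℝ) : EReal) ≤ Lag H q := by
  obtain ⟨C, hC⟩ :=
    (isCompact_closedBall (0 : Euc n) |β|).exists_bound_of_continuousOn hHc.continuousOn
  refine ⟨C, fun q => (EReal.coe_le_coe_iff.2 ?_).trans (le_lag (β • ‖q‖⁻¹ • q) q)⟩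
  have hp : β • ‖q‖⁻¹ • q ∈ closedBall (0 : Euc n) |β| := by
    rw [mem_closedBall_zero_iff, norm_smul, norm_smul, norm_inv, norm_norm, Real.norm_eq_abs]
    exact mul_le_of_le_one_right (abs_nonneg β) inv_mul_le_one
  have hinner : ⟪β • ‖q‖⁻¹ • q, q⟫ = β * ‖q‖ := by
    rw [real_inner_smul_left, real_inner_smul_left, real_inner_self_eq_norm_sq]
    rcases eq_or_ne ‖q‖ 0 with h | h
    · simp [h]
    · field_simp
  rw [hinner]
  linarith [(le_abs_self _).trans (hC _ hp)]

end Lagrangian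

lemma EReal.exists_eq_coe_of_coe_eq_sub_mul {r a t : ℝ} (ht : 0 < t) {L : EReal}
    (h : (r : EReal) = a - t * L) : ∃ ℓ : ℝ, L = ℓ ∧ r = a - t * ℓ := by
  induction L using EReal.rec with
  | bot => simp [EReal.coe_mul_bot_of_pos ht] at h
  | top => simp [EReal.coe_mul_top_of_pos ht] at h
  | coe ℓ => exact ⟨ℓ, rfl, by exact_mod_cast h⟩

lemma LocLipOn.exists_sub_le_mul_norm {n : ℕ} {u : Euc n → ℝ} {U : Set (Euc n)}
    (hu : LocLipOn u U) {x : Euc n} (hx : x ∈ U) (hbdd : BddAbove (u '' U)) :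
    ∃ β, ∀ y ∈ U, u y - u x ≤ β * ‖y - x‖ := by
  obtain ⟨K, s, hs, hlip⟩ := hu x hx
  obtain ⟨r, hr, hrs⟩ := Metric.mem_nhdsWithin_iff.1 hs
  obtain ⟨M, hM⟩ := hbdd
  have hMx : u x ≤ M := hM (mem_image_of_mem u hx)
  refine ⟨K + (M - u x) / r, fun y hy => ?_⟩
  have hdiv : 0 ≤ (M - u x) / r := div_nonneg (by linarith) hr.le
  rcases lt_or_ge ‖y - x‖ r with hyr | hyr
  · have hys : y ∈ s := hrs ⟨by rwa [mem_ball, dist_eq_norm], hy⟩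
    have := hlip.dist_le_mul y hys x (hrs ⟨mem_ball_self hr, hx⟩)
    rw [Real.dist_eq, dist_eq_norm] at this
    nlinarith [le_abs_self (u y - u x), norm_nonneg (y - x)]
  · have hfar : M - u x ≤ (M - u x) / r * ‖y - x‖ := by
      rw [div_mul_eq_mul_div, le_div_iff₀ hr]
      nlinarith
    nlinarith [hM (mem_image_of_mem u hy), K.coe_nonneg, norm_nonneg (y - x)]

section HopfLax

variable {n : ℕ} {H : Euc n → ℝ} {U : Set (Euc n)} {u : Euc n → ℝ} {x : Euc n}

def tupSet (H : Euc n → ℝ) (S : Set (Euc n)) (u : Euc n → ℝ) (t : ℝ) (x : Euc n) : Set ℝ :=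
  {r : ℝ | ∃ y ∈ S, (r : EReal) = (u y : EReal) - (t : EReal) * Lag H (t⁻¹ • (y - x))}

lemma tupOn_eq_sSup {t : ℝ} (ht : t ≠ 0) : TupOn H U u t x = sSup (tupSet H U u t x) :=
  if_neg ht

lemma sub_mul_mem_tupSet {q : Euc n} {ℓ : ℝ} (hq : Lag H q = ℓ) {t : ℝ} (ht : t ≠ 0)
    (hxq : x + t • q ∈ U) : u (x + t • q) - t * ℓ ∈ tupSet H U u t x :=
  ⟨x + t • q, hxq, by rw [add_sub_cancel_left, inv_smul_smul₀ ht, hq]; norm_cast⟩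

lemma exists_forall_tupSet_le (hHc : Continuous H) (hu : LocLipOn u U) (hx : x ∈ U)
    (hbdd : BddAbove (u '' U)) : ∃ C, ∀ t > 0, ∀ r ∈ tupSet H U u t x, r ≤ u x + t * C := by
  obtain ⟨β, hβ⟩ := hu.exists_sub_le_mul_norm hx hbdd
  obtain ⟨C, hC⟩ := exists_mul_norm_sub_le_lag hHc β
  refine ⟨C, fun t ht r ⟨y, hy, hr⟩ => ?_⟩
  obtain ⟨ℓ, hℓ, rfl⟩ := EReal.exists_eq_coe_of_coe_eq_sub_mul ht hr
  have h1 : β * ‖t⁻¹ • (y - x)‖ - C ≤ ℓ := by exact_mod_cast hℓ ▸ hC (t⁻¹ • (y - x))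
  have h2 : β * ‖y - x‖ - t * C ≤ t * ℓ := by
    calc β * ‖y - x‖ - t * C = t * (β * ‖t⁻¹ • (y - x)‖ - C) := by
          rw [norm_smul, norm_inv, Real.norm_eq_abs, abs_of_pos ht]; field_simp
      _ ≤ t * ℓ := by gcongr
  linarith [hβ y hy]

lemma sub_mul_le_tupOn (hHc : Continuous H) (hu : LocLipOn u U) (hx : x ∈ U)
    (hbdd : BddAbove (u '' U)) {q : Euc n} {ℓ : ℝ} (hq : Lag H q = ℓ) {t : ℝ} (ht : 0 < t)
    (hxq : x + t • q ∈ U) : u (x + t • q) - t * ℓ ≤ TupOn H U u t x := by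
  obtain ⟨C, hC⟩ := exists_forall_tupSet_le hHc hu hx hbdd
  rw [tupOn_eq_sSup ht.ne']
  exact le_csSup ⟨_, hC t ht⟩ (sub_mul_mem_tupSet hq ht.ne' hxq)

lemma le_tupOn (hH0 : H 0 = 0) (hHnn : ∀ p, 0 ≤ H p) (hHc : Continuous H) (hu : LocLipOn u U)
    (hx : x ∈ U) (hbdd : BddAbove (u '' U)) {t : ℝ} (ht : 0 < t) : u x ≤ TupOn H U u t x := by
  simpa using sub_mul_le_tupOn hHc hu hx hbdd (lag_zero hH0 hHnn) ht (by simpa using hx)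

lemma exists_tupOn_le (hH0 : H 0 = 0) (hHnn : ∀ p, 0 ≤ H p) (hHc : Continuous H)
    (hu : LocLipOn u U) (hx : x ∈ U) (hbdd : BddAbove (u '' U)) :
    ∃ C, ∀ t > 0, TupOn H U u t x ≤ u x + t * C := by
  obtain ⟨C, hC⟩ := exists_forall_tupSet_le hHc hu hx hbdd
  refine ⟨C, fun t ht => ?_⟩
  rw [tupOn_eq_sSup ht.ne']
  exact csSup_le ⟨_, sub_mul_mem_tupSet (lag_zero hH0 hHnn) ht.ne' (by simpa using hx)⟩ (hC t ht)

lemma isBoundedUnder_le_slope_tupOn (hH0 : H 0 = 0) (hHnn : ∀ p, 0 ≤ H p)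
    (hHc : Continuous H) (hu : LocLipOn u U) (hx : x ∈ U) (hbdd : BddAbove (u '' U)) :
    IsBoundedUnder (· ≤ ·) (𝓝[>] 0) fun t => (TupOn H U u t x - u x) / t := by
  obtain ⟨C, hC⟩ := exists_tupOn_le hH0 hHnn hHc hu hx hbdd
  refine isBoundedUnder_of_eventually_le (a := C) ?_
  filter_upwards [self_mem_nhdsWithin] with t (ht : 0 < t)
  rw [div_le_iff₀ ht]
  linarith [hC t ht]

lemma splus_nonneg (hH0 : H 0 = 0) (hHnn : ∀ p, 0 ≤ H p) (hHc : Continuous H)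
    (hu : LocLipOn u U) (hx : x ∈ U) (hbdd : BddAbove (u '' U)) : 0 ≤ Splus H U u x := by
  refine le_limsup_of_frequently_le (Eventually.frequently ?_)
    (isBoundedUnder_le_slope_tupOn hH0 hHnn hHc hu hx hbdd)
  filter_upwards [self_mem_nhdsWithin] with t (ht : 0 < t)
  exact div_nonneg (sub_nonneg.2 (le_tupOn hH0 hHnn hHc hu hx hbdd ht)) ht.le

lemma eventually_sub_lt_of_splus_le (hH0 : H 0 = 0) (hHnn : ∀ p, 0 ≤ H p) (hHc : Continuous H)
    (hU : IsOpen U) (hu : LocLipOn u U) (hx : x ∈ U) (hbdd : BddAbove (u '' U)) {q : Euc n}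
    {ℓ : ℝ} (hq : Lag H q = ℓ) {k r : ℝ} (hk : Splus H U u x ≤ k) (hr : ℓ + k < r) :
    ∀ᶠ h in 𝓝[>] 0, u (x + h • q) - u x < h * r := by
  have hslope : ∀ᶠ h in 𝓝[>] 0, (TupOn H U u h x - u x) / h < r - ℓ :=
    eventually_lt_of_limsup_lt (hk.trans_lt (by linarith))
      (isBoundedUnder_le_slope_tupOn hH0 hHnn hHc hu hx hbdd)
  have hmem : ∀ᶠ h in 𝓝[>] (0 : ℝ), x + h • q ∈ U :=
    (((continuous_const.add (continuous_id.smul continuous_const)).tendsto' (0 : ℝ) x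
      (by simp)).eventually (hU.mem_nhds hx)).filter_mono nhdsWithin_le_nhds
  filter_upwards [hslope, hmem, self_mem_nhdsWithin] with h hlt hxq (hh : 0 < h)
  rw [div_lt_iff₀ hh] at hlt
  linarith [sub_mul_le_tupOn hHc hu hx hbdd hq hh hxq]

end HopfLax

lemma sub_le_mul_of_eventually_sub_lt {g : ℝ → ℝ} {T M : ℝ} (hT : 0 < T)
    (hg : ContinuousOn g (Icc 0 T))
    (hs : ∀ τ ∈ Ioo 0 T, ∀ r > M, ∀ᶠ h in 𝓝[>] 0, g (τ + h) - g τ < h * r) :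
    g T - g 0 ≤ T * M := by
  -- The estimate is only available on `(0, T)`: fence on `[σ, T]`, then let `σ → 0`.
  have hσ : ∀ σ ∈ Ioo 0 T, g T ≤ g σ + M * (T - σ) := by
    intro σ hσ
    have hB : ∀ t, HasDerivWithinAt (fun t => g σ + M * (t - σ)) M (Ici t) t := fun t => by
      simpa using (((hasDerivWithinAt_id t _).sub_const σ).const_mul M).const_add (g σ)
    refine image_le_of_liminf_slope_right_le_deriv_boundary
      (hg.mono (Icc_subset_Icc hσ.1.le le_rfl)) (by simp) (by fun_prop) (fun t _ => hB t)
      (fun t ht r hr => ?_) (right_mem_Icc.2 hσ.2.le)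
    have hev := hs t ⟨hσ.1.trans_le ht.1, ht.2⟩ r hr
    rw [show 𝓝[>] t = map (t + ·) (𝓝[>] 0) by rw [map_add_left_nhdsGT, add_zero],
      frequently_map]
    refine (hev.and self_mem_nhdsWithin).frequently.mono fun h ⟨hlt, (hh : 0 < h)⟩ => ?_
    rwa [slope_def_field, add_sub_cancel_left, div_lt_iff₀ hh, mul_comm]
  have := le_on_closure hσ continuousOn_const
    (by rw [closure_Ioo hT.ne]; exact hg.add (by fun_prop))
    (by rw [closure_Ioo hT.ne]; exact left_mem_Icc.2 hT.le : (0 : ℝ) ∈ closure (Ioo 0 T))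
  simp only [sub_zero] at this
  linarith

section Segments

variable {n : ℕ} {H : Euc n → ℝ} {U : Set (Euc n)} {u : Euc n → ℝ}

lemma sub_le_mul_of_splus_le (hH0 : H 0 = 0) (hHnn : ∀ p, 0 ≤ H p) (hHc : Continuous H)
    (hU : IsOpen U) (hu : LocLipOn u U) (hucl : ContinuousOn u (closure U))
    (hbdd : BddAbove (u '' U)) {k : ℝ} (hk : ∀ y ∈ U, Splus H U u y ≤ k) {q : Euc n} {ℓ : ℝ}
    (hq : Lag H q ≤ ℓ) {x : Euc n} {T : ℝ} (hT : 0 < T) (hseg : ∀ τ ∈ Ioo 0 T, x + τ • q ∈ U) :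
    u (x + T • q) - u x ≤ T * (ℓ + k) := by
  obtain ⟨ℓ', hℓ'⟩ : ∃ ℓ' : ℝ, Lag H q = ℓ' :=
    ⟨_, (EReal.coe_toReal (ne_top_of_le_ne_top (EReal.coe_ne_top ℓ) hq) (lag_ne_bot q)).symm⟩
  have hℓ : ℓ' ≤ ℓ := by exact_mod_cast hℓ' ▸ hq
  have hpath : Continuous fun τ : ℝ => x + τ • q := by fun_prop
  have hmaps : MapsTo (fun τ : ℝ => x + τ • q) (Icc 0 T) (closure U) := fun τ hτ =>
    closure_mono (image_subset_iff.2 hseg)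
      (image_closure_subset_closure_image hpath ⟨τ, closure_Ioo hT.ne ▸ hτ, rfl⟩)
  have key := sub_le_mul_of_eventually_sub_lt hT (hucl.comp hpath.continuousOn hmaps)
    (M := ℓ' + k) fun τ hτ r hr => by
      filter_upwards [eventually_sub_lt_of_splus_le hH0 hHnn hHc hU hu (hseg τ hτ) hbdd hℓ'
        (hk _ (hseg τ hτ)) hr] with h hh
      simpa [add_assoc, add_smul] using hh
  rw [Function.comp_apply, Function.comp_apply, zero_smul, add_zero] at key
  nlinarith

lemma abs_sub_le_of_splus_le (hH0 : H 0 = 0) (hHnn : ∀ p, 0 ≤ H p) (hHc : Continuous H)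
    (hU : IsOpen U) (hu : LocLipOn u U) (hucl : ContinuousOn u (closure U))
    (hbdd : BddAbove (u '' U)) {k : ℝ} (hk : ∀ y ∈ U, Splus H U u y ≤ k) {q : Euc n} {ℓ : ℝ}
    (hq : Lag H q ≤ ℓ) (hq' : Lag H (-q) ≤ ℓ) {x : Euc n} {T : ℝ} (hT : 0 < T)
    (hseg : ∀ τ ∈ Ioo 0 T, x + τ • q ∈ U) :
    |u (x + T • q) - u x| ≤ T * (ℓ + k) := by
  have hback := sub_le_mul_of_splus_le hH0 hHnn hHc hU hu hucl hbdd hk hq' hT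
    (x := x + T • q) fun τ hτ => by
      convert hseg (T - τ) ⟨by linarith [hτ.2], by linarith [hτ.1]⟩ using 1
      module
  rw [smul_neg, add_neg_cancel_right] at hback
  rw [abs_le]
  constructor <;> linarith [sub_le_mul_of_splus_le hH0 hHnn hHc hU hu hucl hbdd hk hq hT hseg]

end Segments

lemma exists_lag_le {n : ℕ} {H : Euc n → ℝ} (hH : ConvexOn ℝ univ H) (hHc : Continuous H)
    (hH0 : H 0 = 0) (hHnn : ∀ p, 0 ≤ H p) (hZb : IsBounded {p : Euc n | H p = 0})
    (hZi : interior {p : Euc n | H p = 0} = ∅) {δ : ℝ} (hδ : 0 < δ) :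
    ∃ q : Euc n, q ≠ 0 ∧ Lag H q ≤ (‖q‖ * δ : ℝ) ∧ Lag H (-q) ≤ (‖q‖ * δ : ℝ) := by
  have hZ : {p : Euc n | H p = 0} = {p ∈ univ | H p ≤ 0} :=
    Set.ext fun p => ⟨fun h => ⟨mem_univ p, h.le⟩, fun h => le_antisymm h.2 (hHnn p)⟩
  obtain ⟨e, he1, he⟩ := exists_norm_eq_one_forall_inner_eq_zero (Z := {p | H p = 0})
    (hZ ▸ hH.convex_le 0) hH0 hZi
  obtain ⟨ρ, hρ, hρe⟩ := hH.exists_mul_abs_inner_sub_le hHc hH0 hHnn hZb he hδ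
  have hq : ‖ρ • e‖ = ρ := by rw [norm_smul, he1, mul_one, Real.norm_of_nonneg hρ.le]
  refine ⟨ρ • e, smul_ne_zero hρ.ne' (norm_ne_zero_iff.1 (he1.trans_ne one_ne_zero)), ?_, ?_⟩
  all_goals
    refine hq.symm ▸ lag_le fun p => le_trans ?_ (hρe p)
    simp only [inner_neg_right, real_inner_smul_right, sub_le_sub_iff_right]
  · exact mul_le_mul_of_nonneg_left (le_abs_self _) hρ.le
  · rw [← mul_neg]
    exact mul_le_mul_of_nonneg_left (neg_le_abs _) hρ.le

theorem prepatch_general {n : ℕ} (H : Euc n → ℝ)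
    (hHconv : ConvexOn ℝ Set.univ H) (hH0 : H 0 = 0) (hHnonneg : ∀ p, 0 ≤ H p)
    (hHzb : Bornology.IsBounded {p : Euc n | H p = 0})
    (hHzi : interior {p : Euc n | H p = 0} = ∅) :
    ∀ ε d : ℝ, 0 < ε → 0 < d → ∃ k > (0:ℝ),
      ∀ U : Set (Euc n), IsOpen U → Bornology.IsBounded U → Metric.diam U ≤ d →
        ∀ u v : Euc n → ℝ,
          LocLipOn u U → ContinuousOn u (closure U) →
          LocLipOn v U → ContinuousOn v (closure U) →
          EqOn u v (frontier U) →
          (∀ x ∈ U, Splus H U u x + Splus H U v x ≤ k) →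
          ∀ x ∈ closure U, |u x - v x| ≤ ε := by
  intro ε d hε hd
  have hHc : Continuous H := continuousOn_univ.1 (hHconv.continuousOn isOpen_univ)
  obtain ⟨q, hq0, hLq, hLq'⟩ :=
    exists_lag_le hHconv hHc hH0 hHnonneg hHzb hHzi (δ := ε / (4 * d)) (by positivity)
  set k := ‖q‖ * ε / (4 * d)
  refine ⟨k, by positivity, fun U hUo hUb hUd u v hu hucl hv hvcl heq hsum x hx => ?_⟩
  by_cases hxU : x ∈ U
  swap
  · rw [heq (hUo.frontier_eq ▸ ⟨hx, hxU⟩), sub_self, abs_zero]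
    exact hε.le
  obtain ⟨T, hT, hseg, hfr, hTd⟩ := hUo.exists_mem_frontier_of_ray hUb hxU hq0
  have hbdd : ∀ w : Euc n → ℝ, ContinuousOn w (closure U) → BddAbove (w '' U) := fun w hw =>
    (hUb.isCompact_closure.bddAbove_image hw).mono (image_mono subset_closure)
  have hosc : ∀ w : Euc n → ℝ, LocLipOn w U → ContinuousOn w (closure U) →
      (∀ y ∈ U, Splus H U w y ≤ k) → |w (x + T • q) - w x| ≤ ε / 2 := fun w hw hwcl hwk =>
    (abs_sub_le_of_splus_le hH0 hHnonneg hHc hUo hw hwcl (hbdd w hwcl) hwk hLq hLq' hT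
      fun τ hτ => hseg τ (Ioo_subset_Ico_self hτ)).trans <| by
        calc T * (‖q‖ * (ε / (4 * d)) + k) = T * ‖q‖ * (ε / (2 * d)) := by ring
          _ ≤ d * (ε / (2 * d)) := by gcongr; exact hTd.trans hUd
          _ = ε / 2 := by field_simp
  have hu' := hosc u hu hucl fun y hy => by
    linarith [hsum y hy, splus_nonneg hH0 hHnonneg hHc hv hy (hbdd v hvcl)]
  have hv' := hosc v hv hvcl fun y hy => by
    linarith [hsum y hy, splus_nonneg hH0 hHnonneg hHc hu hy (hbdd u hucl)]
  rw [heq hfr] at hu'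
  linarith [abs_sub_le (u x) (v (x + T • q)) (v x), abs_sub_comm (u x) (v (x + T • q))]

/-- If `S⁺u + S⁺v` is uniformly small and `u = v` on `∂U`, then `u` and `v` are uniformly
close, with a smallness threshold depending only on `H`, `diam U` and `ε`. -/
theorem prepatch {n : ℕ} (hn : 1 ≤ n) (H : Euc n → ℝ)
    (hHconv : ConvexOn ℝ Set.univ H) (hH0 : H 0 = 0) (hHnonneg : ∀ p, 0 ≤ H p)
    (hHzb : Bornology.IsBounded {p : Euc n | H p = 0})
    (hHzi : interior {p : Euc n | H p = 0} = ∅) :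
    ∀ ε d : ℝ, 0 < ε → 0 < d → ∃ k > (0:ℝ),
      ∀ U : Set (Euc n), IsOpen U → Bornology.IsBounded U → Metric.diam U ≤ d →
        ∀ u v : Euc n → ℝ,
          LocLipOn u U → ContinuousOn u (closure U) →
          LocLipOn v U → ContinuousOn v (closure U) →
          EqOn u v (frontier U) →
          (∀ x ∈ U, Splus H U u x + Splus H U v x ≤ k) →
          ∀ x ∈ closure U, |u x - v x| ≤ ε :=
  prepatch_general H hHconv hH0 hHnonneg hHzb hHzi
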